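/- The Pastro polynomials satisfy the three-term recurrence relation of Laurent biorthogonal type: for every positive integer n and all real x, P_{n+1}(x) + μ_n^{(1)} P_n(x) = x ( P_n(x) + μ_n^{(2)} P_{n-1}(x) ), where μ_n^{(1)} = -q(b - a q^n) / ( a (1 - b q^n) ) and μ_n^{(2)} = -b q (1 - q^n)(1 - a q^{n-1}) / ( a (1 - b q^n)(1 - b q^{n-1}) ). -/

import Mathlib

/-- The q-Pochhammer symbol `(z;q)_k = ∏_{j=0}^{k-1} (1 - z q^j)`. -/
noncomputable def qPoch (q z : ℝ) (k : ℕ) : ℝ :=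
  ∏ j ∈ Finset.range k, (1 - z * q ^ j)

/-- Coefficient `c_{n,k}` of the monic Pastro polynomial. -/
noncomputable def pastroCoeff (q a b : ℝ) (n k : ℕ) : ℝ :=
  (qPoch q (a⁻¹ * b * q ^ (1 - (n : ℤ))) n * qPoch q q n /
      (qPoch q (q ^ (-(n : ℤ))) n * qPoch q b n)) *
    (qPoch q (q ^ (-(n : ℤ))) k * qPoch q b k /
      (qPoch q (a⁻¹ * b * q ^ (1 - (n : ℤ))) k * qPoch q q k))

/-- The monic Pastro polynomial `P_n(x;a,b;q)`. -/
noncomputable def pastroP (q a b : ℝ) (n : ℕ) (x : ℝ) : ℝ :=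
  ∑ k ∈ Finset.range (n + 1), pastroCoeff q a b n k * x ^ k

/-!
Both sides are polynomials in `x`, so it suffices to compare coefficients; since
`(q^{-n};q)_k = 0` for `k > n`, all of them can be summed over a common range. The coefficients
`c_{n,k}` are hypergeometric in both indices: `c_{n,k+1} / c_{n,k}` and `c_{n+1,k} / c_{n,k}` are
explicit rational functions of `q^n` and `q^k`. The `n`-relation at `k = 0` cancels the constant
terms, and the contiguous relations express the four coefficients of `x^{m+1}` through
`c_{n+1,m}`, leaving a polynomial identity.
-/

theorem qPoch_succ (q z : ℝ) (k : ℕ) : qPoch q z (k + 1) = qPoch q z k * (1 - z * q ^ k) :=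
  Finset.prod_range_succ _ _

theorem qPoch_succ' (q z : ℝ) (k : ℕ) : qPoch q z (k + 1) = (1 - z) * qPoch q (z * q) k := by
  simp only [qPoch, Finset.prod_range_succ', pow_succ, pow_zero, mul_one, mul_assoc, mul_comm q]
  ring

theorem qPoch_mul_one_sub (q z : ℝ) (k : ℕ) :
    qPoch q z k * (1 - z * q ^ k) = (1 - z) * qPoch q (z * q) k := by
  rw [← qPoch_succ, qPoch_succ']

theorem qPoch_ne_zero {q z : ℝ} {k : ℕ} (h : ∀ j < k, z * q ^ j ≠ 1) : qPoch q z k ≠ 0 :=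
  Finset.prod_ne_zero_iff.mpr fun j hj => sub_ne_zero.mpr (h j (Finset.mem_range.mp hj)).symm

theorem qPoch_eq_zero {q z : ℝ} {j k : ℕ} (hj : j < k) (h : z * q ^ j = 1) : qPoch q z k = 0 :=
  Finset.prod_eq_zero (Finset.mem_range.mpr hj) (by rw [h, sub_self])

theorem qPoch_ratio_succ (q u v w s : ℝ) (k : ℕ) (hvk : 1 - v * q ^ k ≠ 0)
    (hsk : 1 - s * q ^ k ≠ 0) :
    qPoch q u (k + 1) * qPoch q w (k + 1) / (qPoch q v (k + 1) * qPoch q s (k + 1)) *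
        ((1 - v * q ^ k) * (1 - s * q ^ k)) =
      qPoch q u k * qPoch q w k / (qPoch q v k * qPoch q s k) *
        ((1 - u * q ^ k) * (1 - w * q ^ k)) := by
  simp only [qPoch_succ]
  rw [mul_mul_mul_comm (qPoch q v k), div_mul_eq_mul_div,
    mul_div_mul_right _ _ (mul_ne_zero hvk hsk)]
  ring

theorem qPoch_ratio_shift (q b z w : ℝ) (n k : ℕ) (hzn : qPoch q (z * q) n ≠ 0) (hz : 1 - z ≠ 0)
    (hw : 1 - w ≠ 0) (hb : 1 - b * q ^ n ≠ 0) (hw' : 1 - w * q ^ k ≠ 0) :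
    qPoch q w (n + 1) * qPoch q q (n + 1) / (qPoch q z (n + 1) * qPoch q b (n + 1)) *
        (qPoch q z k * qPoch q b k / (qPoch q w k * qPoch q q k)) *
          ((1 - b * q ^ n) * (1 - z * q ^ k)) =
      qPoch q (w * q) n * qPoch q q n / (qPoch q (z * q) n * qPoch q b n) *
        (qPoch q (z * q) k * qPoch q b k / (qPoch q (w * q) k * qPoch q q k)) *
          ((1 - q ^ (n + 1)) * (1 - w * q ^ k)) := by
  have hzq : qPoch q (z * q) k = qPoch q z k * (1 - z * q ^ k) / (1 - z) := by
    rw [qPoch_mul_one_sub, mul_div_cancel_left₀ _ hz]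
  have hwq : qPoch q (w * q) k = qPoch q w k * (1 - w * q ^ k) / (1 - w) := by
    rw [qPoch_mul_one_sub, mul_div_cancel_left₀ _ hw]
  rw [qPoch_succ' q z, qPoch_succ' q w, qPoch_succ q q, qPoch_succ q b, hzq, hwq, pow_succ']
  -- otherwise `field_simp` normalises these factors and no longer recognises `hzn` and `hb`
  generalize qPoch q (z * q) n = P at hzn ⊢
  generalize b * q ^ n = B at hb ⊢
  field_simp

theorem pow_ne_pow_of_zpow_ne_one {G₀ : Type*} [GroupWithZero G₀] {q : G₀} (hq : q ≠ 0)
    (hq1 : ∀ k : ℤ, k ≠ 0 → q ^ k ≠ 1) {i j : ℕ} (hij : i ≠ j) : q ^ i ≠ q ^ j := fun h =>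
  hq1 (i - j) (by omega) <| by
    rw [zpow_sub₀ hq, zpow_natCast, zpow_natCast, h, div_self (pow_ne_zero j hq)]

theorem mul_pow_ne_mul_pow_of_zpow {K : Type*} [Field K] {q a b : K} (hq : q ≠ 0) (ha : a ≠ 0)
    (habq : ∀ m : ℤ, a⁻¹ * b * q ^ m ≠ 1) (i j : ℕ) : a * q ^ i ≠ b * q ^ j := fun h =>
  habq (j - i) <| by
    rw [zpow_sub₀ hq, zpow_natCast, zpow_natCast]
    field_simp
    linear_combination -h

theorem inv_pow_mul_pow_ne_one {q : ℝ} (hq : q ≠ 0) (hqq : ∀ i j : ℕ, i ≠ j → q ^ i ≠ q ^ j)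
    {n j : ℕ} (h : j ≠ n) : (q ^ n)⁻¹ * q ^ j ≠ 1 := by
  rw [Ne, inv_mul_eq_one₀ (pow_ne_zero n hq)]
  exact hqq n j h.symm

theorem div_mul_pow_ne_one {q a b : ℝ} (hq : q ≠ 0) (ha : a ≠ 0)
    (hab : ∀ i j : ℕ, a * q ^ i ≠ b * q ^ j) (n j : ℕ) : b * q / (a * q ^ n) * q ^ j ≠ 1 := by
  rw [div_mul_eq_mul_div, Ne, div_eq_one_iff_eq (mul_ne_zero ha (pow_ne_zero n hq)), mul_assoc,
    ← pow_succ']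
  exact (hab n (j + 1)).symm

theorem mul_pow_ne_one {q : ℝ} (hqq : ∀ i j : ℕ, i ≠ j → q ^ i ≠ q ^ j) (k : ℕ) :
    q * q ^ k ≠ 1 := by
  rw [← pow_succ', ← pow_zero q]
  exact hqq (k + 1) 0 k.succ_ne_zero

theorem pastroCoeff_eq {q : ℝ} (a b : ℝ) (hq : q ≠ 0) (n k : ℕ) :
    pastroCoeff q a b n k =
      qPoch q (b * q / (a * q ^ n)) n * qPoch q q n / (qPoch q (q ^ n)⁻¹ n * qPoch q b n) *
        (qPoch q (q ^ n)⁻¹ k * qPoch q b k / (qPoch q (b * q / (a * q ^ n)) k * qPoch q q k)) := by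
  have hw : a⁻¹ * b * q ^ (1 - (n : ℤ)) = b * q / (a * q ^ n) := by
    rw [zpow_sub₀ hq, zpow_one, zpow_natCast]
    ring
  rw [pastroCoeff, hw, zpow_neg, zpow_natCast]

theorem pastroCoeff_eq_zero_of_lt {q : ℝ} (a b : ℝ) (hq : q ≠ 0) {n k : ℕ} (h : n < k) :
    pastroCoeff q a b n k = 0 := by
  rw [pastroCoeff_eq a b hq, qPoch_eq_zero h (inv_mul_cancel₀ (pow_ne_zero n hq))]
  simp

theorem pastroP_eq_sum {q : ℝ} (a b : ℝ) (hq : q ≠ 0) {n N : ℕ} (h : n < N) (x : ℝ) :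
    pastroP q a b n x = ∑ k ∈ Finset.range N, pastroCoeff q a b n k * x ^ k := by
  refine Finset.sum_subset (Finset.range_subset_range.mpr h) fun k _ hk => ?_
  rw [pastroCoeff_eq_zero_of_lt a b hq (by simpa using hk), zero_mul]

theorem pastroP_add_mul_pastroP {q : ℝ} (a b : ℝ) (hq : q ≠ 0) {n m N : ℕ} (hn : n < N)
    (hm : m < N) (μ x : ℝ) :
    pastroP q a b n x + μ * pastroP q a b m x =
      ∑ k ∈ Finset.range N, (pastroCoeff q a b n k + μ * pastroCoeff q a b m k) * x ^ k := by
  simp only [pastroP_eq_sum a b hq hn, pastroP_eq_sum a b hq hm, Finset.mul_sum,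
    ← Finset.sum_add_distrib, add_mul, mul_assoc]

theorem pastroCoeff_succ_right {q a b : ℝ} (hq : q ≠ 0) (ha : a ≠ 0)
    (hqq : ∀ i j : ℕ, i ≠ j → q ^ i ≠ q ^ j) (hab : ∀ i j : ℕ, a * q ^ i ≠ b * q ^ j) (n k : ℕ) :
    pastroCoeff q a b n (k + 1) * ((a * q ^ n - b * q ^ (k + 1)) * (1 - q ^ (k + 1))) =
      a * pastroCoeff q a b n k * ((q ^ n - q ^ k) * (1 - b * q ^ k)) := by
  have hw := div_mul_pow_ne_one hq ha hab n
  have key := qPoch_ratio_succ q (q ^ n)⁻¹ _ b q k (sub_ne_zero.mpr (hw k).symm)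
    (sub_ne_zero.mpr (mul_pow_ne_one hqq k).symm)
  have e1 : (1 - b * q / (a * q ^ n) * q ^ k) * (a * q ^ n) = a * q ^ n - b * q ^ (k + 1) := by
    field_simp
    ring
  have e2 : (1 - (q ^ n)⁻¹ * q ^ k) * q ^ n = q ^ n - q ^ k := by
    field_simp
  rw [pastroCoeff_eq a b hq, pastroCoeff_eq a b hq, ← e1, ← e2, pow_succ']
  linear_combination (qPoch q (b * q / (a * q ^ n)) n * qPoch q q n /
    (qPoch q (q ^ n)⁻¹ n * qPoch q b n)) * (a * q ^ n) * key

theorem pastroCoeff_succ_left {q a b : ℝ} (hq : q ≠ 0) (ha : a ≠ 0)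
    (hqq : ∀ i j : ℕ, i ≠ j → q ^ i ≠ q ^ j) (hab : ∀ i j : ℕ, a * q ^ i ≠ b * q ^ j)
    (hbq : ∀ j : ℕ, b * q ^ j ≠ 1) (n k : ℕ) :
    a * pastroCoeff q a b (n + 1) k * ((1 - b * q ^ n) * (q ^ (n + 1) - q ^ k)) =
      pastroCoeff q a b n k * ((1 - q ^ (n + 1)) * (a * q ^ (n + 1) - b * q ^ (k + 1))) := by
  have hz : (q ^ (n + 1))⁻¹ * q = (q ^ n)⁻¹ := by
    rw [pow_succ, mul_inv, inv_mul_cancel_right₀ hq]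
  have hw : b * q / (a * q ^ (n + 1)) * q = b * q / (a * q ^ n) := by
    field_simp
    ring
  have hw' := div_mul_pow_ne_one hq ha hab (n + 1)
  have hz1 : (q ^ (n + 1))⁻¹ ≠ 1 := by
    simpa using inv_pow_mul_pow_ne_one (j := 0) hq hqq n.succ_ne_zero.symm
  have hw1 : b * q / (a * q ^ (n + 1)) ≠ 1 := by simpa using hw' 0
  have key := qPoch_ratio_shift q b (q ^ (n + 1))⁻¹ (b * q / (a * q ^ (n + 1))) n k
    (qPoch_ne_zero fun j hj => hz ▸ inv_pow_mul_pow_ne_one hq hqq hj.ne)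
    (sub_ne_zero.mpr hz1.symm) (sub_ne_zero.mpr hw1.symm) (sub_ne_zero.mpr (hbq n).symm)
    (sub_ne_zero.mpr (hw' k).symm)
  have e1 : (1 - (q ^ (n + 1))⁻¹ * q ^ k) * q ^ (n + 1) = q ^ (n + 1) - q ^ k := by
    field_simp
  have e2 : (1 - b * q / (a * q ^ (n + 1)) * q ^ k) * (a * q ^ (n + 1)) =
      a * q ^ (n + 1) - b * q ^ (k + 1) := by
    field_simp
    ring
  rw [hz, hw, ← pastroCoeff_eq a b hq, ← pastroCoeff_eq a b hq] at key
  rw [← e1, ← e2]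
  linear_combination a * q ^ (n + 1) * key

theorem pastroCoeff_succ_zero {q a b : ℝ} (hq : q ≠ 0) (ha : a ≠ 0)
    (hqq : ∀ i j : ℕ, i ≠ j → q ^ i ≠ q ^ j) (hab : ∀ i j : ℕ, a * q ^ i ≠ b * q ^ j)
    (hbq : ∀ j : ℕ, b * q ^ j ≠ 1) (n : ℕ) :
    pastroCoeff q a b (n + 1) 0 +
      -(q * (b - a * q ^ n)) / (a * (1 - b * q ^ n)) * pastroCoeff q a b n 0 = 0 := by
  have hbn : 1 - b * q ^ n ≠ 0 := sub_ne_zero.mpr (hbq n).symm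
  have hqn : q ^ (n + 1) - 1 ≠ 0 := sub_ne_zero.mpr (pow_zero q ▸ hqq (n + 1) 0 n.succ_ne_zero)
  have h := pastroCoeff_succ_left hq ha hqq hab hbq n 0
  field_simp
  refine mul_left_cancel₀ hqn ?_
  linear_combination h

theorem pastroCoeff_succ_succ {q a b : ℝ} (hq : q ≠ 0) (ha : a ≠ 0)
    (hqq : ∀ i j : ℕ, i ≠ j → q ^ i ≠ q ^ j) (hab : ∀ i j : ℕ, a * q ^ i ≠ b * q ^ j)
    (hbq : ∀ j : ℕ, b * q ^ j ≠ 1) (n m : ℕ) :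
    pastroCoeff q a b (n + 2) (m + 1) +
        -(q * (b - a * q ^ (n + 1))) / (a * (1 - b * q ^ (n + 1))) *
          pastroCoeff q a b (n + 1) (m + 1) =
      pastroCoeff q a b (n + 1) m +
        -(b * q * (1 - q ^ (n + 1)) * (1 - a * q ^ n)) /
          (a * (1 - b * q ^ (n + 1)) * (1 - b * q ^ n)) * pastroCoeff q a b n m := by
  have hk := pastroCoeff_succ_right hq ha hqq hab (n + 2) m
  have hn2 := pastroCoeff_succ_left hq ha hqq hab hbq (n + 1) (m + 1)
  have hn1 := pastroCoeff_succ_left hq ha hqq hab hbq (n + 1) m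
  have hn0 := pastroCoeff_succ_left hq ha hqq hab hbq n m
  have hq1 : ∀ j : ℕ, j ≠ 0 → 1 - q ^ j ≠ 0 := fun j hj =>
    sub_ne_zero.mpr (pow_zero q ▸ hqq 0 j hj.symm)
  have hb1 : ∀ j : ℕ, 1 - b * q ^ j ≠ 0 := fun j => sub_ne_zero.mpr (hbq j).symm
  have hab1 : ∀ i j : ℕ, a * q ^ i - b * q ^ j ≠ 0 := fun i j => sub_ne_zero.mpr (hab i j)
  set c4 := pastroCoeff q a b (n + 2) (m + 1)
  set c3 := pastroCoeff q a b (n + 1) (m + 1)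
  set c2 := pastroCoeff q a b (n + 1) m
  set c1 := pastroCoeff q a b n m
  set E := a * (1 - b * q ^ (n + 1)) * (1 - b * q ^ n)
  set u3 := -(q * (b - a * q ^ (n + 1))) * (1 - b * q ^ n)
  set u1 := b * q * (1 - q ^ (n + 1)) * (1 - a * q ^ n)
  set K := (a * q ^ (n + 2) - b * q ^ (m + 1)) * (1 - q ^ (m + 1))
  set N2 := (1 - q ^ (n + 2)) * (a * q ^ (n + 2) - b * q ^ (m + 2))
  set N1 := (1 - q ^ (n + 2)) * (a * q ^ (n + 2) - b * q ^ (m + 1))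
  set N0 := (1 - q ^ (n + 1)) * (a * q ^ (n + 1) - b * q ^ (m + 1))
  have hP : E * c4 + u3 * c3 - E * c2 + u1 * c1 = 0 := by
    have hN : K * N1 * N2 * N0 ≠ 0 := by
      simp only [K, N0, N1, N2, mul_ne_zero_iff]
      exact ⟨⟨⟨⟨hab1 _ _, hq1 _ (by omega)⟩, hq1 _ (by omega), hab1 _ _⟩, hq1 _ (by omega),
        hab1 _ _⟩, hq1 _ (by omega), hab1 _ _⟩
    refine (mul_eq_zero.mp ?_).resolve_left hN
    -- eliminate `c1`, `c3`, `c2`, `c4` in turn through `hn0`, `hn2`, `hn1`, `hk`: what is left is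
    -- `pastroCoeff q a b (n + 2) m` times a polynomial that vanishes identically
    linear_combination N1 * (E * N0 * N2 +
        u3 * N0 * a * ((1 - b * q ^ (n + 1)) * (q ^ (n + 1 + 1) - q ^ (m + 1)))) * hk
      - K * N2 * (-E * N0 + u1 * a * ((1 - b * q ^ n) * (q ^ (n + 1) - q ^ m))) * hn1
      - K * N1 * u3 * N0 * hn2 - K * N1 * N2 * u1 * hn0
  have hE : E ≠ 0 := mul_ne_zero (mul_ne_zero ha (hb1 _)) (hb1 _)
  have hμ : -(q * (b - a * q ^ (n + 1))) / (a * (1 - b * q ^ (n + 1))) = u3 / E :=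
    (mul_div_mul_right _ _ (hb1 n)).symm
  rw [hμ, div_mul_eq_mul_div, div_mul_eq_mul_div, add_div' _ _ _ hE, add_div' _ _ _ hE,
    div_left_inj' hE]
  linear_combination hP

theorem pastro_recurrence_general (q a b : ℝ) (hq : q ≠ 0) (hq1 : ∀ k : ℤ, k ≠ 0 → q ^ k ≠ 1)
    (ha : a ≠ 0)
    (hbq : ∀ m : ℤ, b * q ^ m ≠ 1) (habq : ∀ m : ℤ, a⁻¹ * b * q ^ m ≠ 1)
    (n : ℕ) (hn : 0 < n) (x : ℝ) :
    pastroP q a b (n + 1) x +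
        (-(q * (b - a * q ^ n)) / (a * (1 - b * q ^ n))) * pastroP q a b n x =
      x * (pastroP q a b n x +
        (-(b * q * (1 - q ^ n) * (1 - a * q ^ ((n : ℤ) - 1))) /
            (a * (1 - b * q ^ n) * (1 - b * q ^ ((n : ℤ) - 1)))) * pastroP q a b (n - 1) x) := by
  obtain ⟨n, rfl⟩ := Nat.exists_eq_add_one_of_ne_zero hn.ne'
  have hqq := fun i j (hij : i ≠ j) => pow_ne_pow_of_zpow_ne_one hq hq1 hij
  have hab := mul_pow_ne_mul_pow_of_zpow hq ha habq
  have hbq' : ∀ j : ℕ, b * q ^ j ≠ 1 := fun j => by simpa using hbq j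
  simp only [Nat.cast_add_one, add_sub_cancel_right, zpow_natCast, Nat.add_sub_cancel]
  rw [pastroP_add_mul_pastroP a b hq (N := n + 3) (by omega) (by omega),
    pastroP_add_mul_pastroP a b hq (N := n + 2) (by omega) (by omega), Finset.sum_range_succ',
    pastroCoeff_succ_zero hq ha hqq hab hbq', zero_mul, add_zero, Finset.mul_sum]
  refine Finset.sum_congr rfl fun k _ => ?_
  rw [← pastroCoeff_succ_succ hq ha hqq hab hbq' n k]
  ring

/-- The Pastro polynomials satisfy the three-term recurrence relation of
Laurent biorthogonal type. -/
theorem pastro_recurrence (q a b : ℝ) (hq : q ≠ 0) (hq1 : ∀ k : ℤ, k ≠ 0 → q ^ k ≠ 1)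
    (ha : a ≠ 0) (hb : b ≠ 0)
    (hbq : ∀ m : ℤ, b * q ^ m ≠ 1) (habq : ∀ m : ℤ, a⁻¹ * b * q ^ m ≠ 1)
    (n : ℕ) (hn : 0 < n) (x : ℝ) :
    pastroP q a b (n + 1) x +
        (-(q * (b - a * q ^ n)) / (a * (1 - b * q ^ n))) * pastroP q a b n x =
      x * (pastroP q a b n x +
        (-(b * q * (1 - q ^ n) * (1 - a * q ^ ((n : ℤ) - 1))) /
            (a * (1 - b * q ^ n) * (1 - b * q ^ ((n : ℤ) - 1)))) * pastroP q a b (n - 1) x) :=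
  pastro_recurrence_general q a b hq hq1 ha hbq habq n hn x
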